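/- arXiv:2110.09265 — 3 statements merged into one kernel-verified Lean document; each statement's English description precedes it below -/
import Mathlib

section
/- Let a ∈ (0,1) and let f : (0,∞) → ℝ be measurable with |f(t)| ≤ C e^{-c/t} for all t > 0, for some constants C, c > 0. Then for every integer m ≥ 1 the integral ∫₀^∞ f(t) t^{-(m+a)} dt converges absolutely, and if ∫₀^∞ f(t) t^{-(m+a)} dt = 0 for every integer m ≥ 1, then for every η ∈ ℝ the (absolutely convergent) integral ∫₀^∞ f(t) t^{-(1+a)} e^{iη/t} dt equals 0. -/
open MeasureTheory Set

private lemma L1 {b s : ℝ} (hb : 0 < b) (hs : 1 < s) :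
    IntegrableOn (fun t : ℝ => Real.exp (-b / t) * t ^ (-s)) (Ioi 0) := by
  have h0 : IntegrableOn (fun u : ℝ => u ^ (s - 2) * Real.exp (-b * u ^ (1 : ℝ))) (Ioi 0) :=
    integrableOn_rpow_mul_exp_neg_mul_rpow (by linarith) zero_lt_one hb
  have h := (integrableOn_Ioi_comp_rpow_iff'
    (fun u => u ^ (s - 2) * Real.exp (-b * u ^ (1 : ℝ))) (p := (-1 : ℝ)) (by norm_num)).mpr h0
  refine h.congr_fun (fun x hx => ?_) measurableSet_Ioi
  have hx0 : (0 : ℝ) < x := hx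
  have hx1 : x ^ (-1 : ℝ) = x⁻¹ := Real.rpow_neg_one x
  beta_reduce
  rw [smul_eq_mul, hx1, Real.rpow_one, Real.inv_rpow hx0.le, ← Real.rpow_neg hx0.le,
    show (-1 - 1 : ℝ) = -2 by norm_num]
  rw [show -b * x⁻¹ = -b / x by ring]
  rw [← mul_assoc, ← Real.rpow_add hx0, show (-2 : ℝ) + -(s - 2) = -s by ring, mul_comm]

private lemma L2 {f : ℝ → ℝ} (hf : Measurable f) {C c : ℝ} (hc : 0 < c)
    (hbound : ∀ t, 0 < t → |f t| ≤ C * Real.exp (-c / t)) {s : ℝ} (hs : 1 < s) :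
    IntegrableOn (fun t : ℝ => f t * t ^ (-s)) (Ioi 0) := by
  have hg : IntegrableOn (fun t : ℝ => C * (Real.exp (-c / t) * t ^ (-s))) (Ioi 0) :=
    (L1 hc hs).const_mul C
  refine Integrable.mono' hg ((hf.mul (by measurability)).aestronglyMeasurable) ?_
  filter_upwards [ae_restrict_mem measurableSet_Ioi] with t ht
  have ht0 : (0 : ℝ) < t := ht
  rw [Real.norm_eq_abs, abs_mul, abs_of_nonneg (Real.rpow_nonneg ht0.le _), ← mul_assoc]
  exact mul_le_mul_of_nonneg_right (hbound t ht0) (Real.rpow_nonneg ht0.le _)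

private lemma L3 {f : ℝ → ℝ} (hf : Measurable f) {C c : ℝ} (hc : 0 < c)
    (hbound : ∀ t, 0 < t → |f t| ≤ C * Real.exp (-c / t)) {s : ℝ} (hs : 1 < s) (η : ℝ) :
    IntegrableOn (fun t : ℝ => ((f t * t ^ (-s) : ℝ) : ℂ) *
      Complex.exp (((η / t : ℝ) : ℂ) * Complex.I)) (Ioi 0) := by
  have hg : IntegrableOn (fun t : ℝ => C * (Real.exp (-c / t) * t ^ (-s))) (Ioi 0) :=
    (L1 hc hs).const_mul C
  refine Integrable.mono' hg ?_ ?_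
  · apply Measurable.aestronglyMeasurable
    apply Measurable.mul
    · exact Complex.measurable_ofReal.comp (hf.mul (by measurability))
    · exact Complex.measurable_exp.comp
        ((Complex.measurable_ofReal.comp ((measurable_const).div measurable_id)).mul_const _)
  filter_upwards [ae_restrict_mem measurableSet_Ioi] with t ht
  have ht0 : (0 : ℝ) < t := ht
  rw [norm_mul, Complex.norm_real, Complex.norm_exp_ofReal_mul_I, mul_one,
    Real.norm_eq_abs, abs_mul, abs_of_nonneg (Real.rpow_nonneg ht0.le _), ← mul_assoc]
  exact mul_le_mul_of_nonneg_right (hbound t ht0) (Real.rpow_nonneg ht0.le _)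

private lemma Lstep {a : ℝ} (ha0 : 0 < a) {f : ℝ → ℝ} (hf : Measurable f)
    {C c : ℝ} (hC : 0 < C) (hc : 0 < c)
    (hbound : ∀ t, 0 < t → |f t| ≤ C * Real.exp (-c / t))
    {η₀ h : ℝ} (hh : |h| ≤ c / 2)
    (hP : ∀ m : ℕ, 1 ≤ m → (∫ t in Ioi (0:ℝ), ((f t * t ^ (-((m:ℝ) + a)) : ℝ) : ℂ) *
        Complex.exp (((η₀ / t : ℝ) : ℂ) * Complex.I)) = 0) :
    ∀ m : ℕ, 1 ≤ m → (∫ t in Ioi (0:ℝ), ((f t * t ^ (-((m:ℝ) + a)) : ℝ) : ℂ) *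
        Complex.exp ((((η₀ + h) / t : ℝ) : ℂ) * Complex.I)) = 0 := by
  intro m hm
  have hm1 : (1 : ℝ) ≤ (m : ℝ) := by exact_mod_cast hm
  have h1 : ∀ n : ℕ, 1 < ((m + n : ℕ) : ℝ) + a := by
    intro n; push_cast; have : (0:ℝ) ≤ n := n.cast_nonneg; linarith
  have h1m : 1 < (m : ℝ) + a := by linarith
  set F : ℕ → ℝ → ℂ := fun n t =>
    (((h : ℂ) * Complex.I) ^ n / (n.factorial : ℂ)) *
      (((f t * t ^ (-(((m + n : ℕ) : ℝ) + a)) : ℝ) : ℂ) *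
        Complex.exp (((η₀ / t : ℝ) : ℂ) * Complex.I)) with hFdef
  -- integrability of each term
  have hFint : ∀ n, IntegrableOn (F n) (Ioi 0) := by
    intro n
    exact (L3 hf hc hbound (h1 n) η₀).const_mul _
  -- splitting of the rpow
  have hsplit : ∀ n : ℕ, ∀ t : ℝ, 0 < t →
      t ^ (-(((m + n : ℕ) : ℝ) + a)) = t ^ (-((m:ℝ) + a)) * (t⁻¹) ^ n := by
    intro n t ht
    rw [show -(((m + n : ℕ) : ℝ) + a) = -((m:ℝ) + a) + (-(n:ℝ)) by push_cast; ring,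
      Real.rpow_add ht, Real.rpow_neg ht.le ((n : ℕ) : ℝ), Real.rpow_natCast, inv_pow]
  -- norm of each term
  have hnorm : ∀ n : ℕ, ∀ t : ℝ, 0 < t →
      ‖F n t‖ = (|f t| * t ^ (-((m:ℝ) + a))) * ((|h| * t⁻¹) ^ n / n.factorial) := by
    intro n t ht
    rw [hFdef]
    simp only [norm_mul, norm_div, norm_pow, Complex.norm_real, Complex.norm_natCast,
      Complex.norm_exp_ofReal_mul_I, mul_one, Complex.norm_I, Real.norm_eq_abs]
    rw [abs_of_nonneg (Real.rpow_nonneg ht.le _), hsplit n t ht, mul_pow]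
    ring
  -- dominating function
  set g : ℝ → ℝ := fun t => C * (Real.exp (-(c/2) / t) * t ^ (-((m:ℝ) + a))) with hgdef
  have hg : IntegrableOn g (Ioi 0) := (L1 (half_pos hc) h1m).const_mul C
  have hnorm_int : ∀ n, IntegrableOn (fun t => ‖F n t‖) (Ioi 0) := fun n => (hFint n).norm
  have hsum_le : ∀ N : ℕ, ∑ n ∈ Finset.range N, ∫ t in Ioi (0:ℝ), ‖F n t‖
      ≤ ∫ t in Ioi (0:ℝ), g t := by
    intro N
    rw [← integral_finset_sum _ (fun n _ => hnorm_int n)]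
    refine setIntegral_mono_on (integrable_finset_sum _ (fun n _ => hnorm_int n)) hg
      measurableSet_Ioi ?_
    intro t ht
    have ht0 : (0:ℝ) < t := ht
    calc ∑ n ∈ Finset.range N, ‖F n t‖
        = (|f t| * t ^ (-((m:ℝ) + a))) *
            ∑ n ∈ Finset.range N, (|h| * t⁻¹) ^ n / n.factorial := by
          rw [Finset.mul_sum]; exact Finset.sum_congr rfl fun n _ => hnorm n t ht0
      _ ≤ (C * Real.exp (-c / t) * t ^ (-((m:ℝ) + a))) * Real.exp (|h| * t⁻¹) := by
          apply mul_le_mul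
          · exact mul_le_mul_of_nonneg_right (hbound t ht0) (Real.rpow_nonneg ht0.le _)
          · exact Real.sum_le_exp_of_nonneg (by positivity) N
          · apply Finset.sum_nonneg; intro i _; positivity
          · positivity
      _ = C * ((Real.exp (-c / t) * Real.exp (|h| * t⁻¹)) * t ^ (-((m:ℝ) + a))) := by ring
      _ ≤ g t := by
          rw [hgdef]
          dsimp only
          refine mul_le_mul_of_nonneg_left ?_ hC.le
          refine mul_le_mul_of_nonneg_right ?_ (Real.rpow_nonneg ht0.le _)
          rw [← Real.exp_add]
          apply Real.exp_le_exp.mpr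
          rw [show -c / t + |h| * t⁻¹ = (-c + |h|) / t by field_simp]
          have habs : 0 ≤ |h| := abs_nonneg h
          exact div_le_div_of_nonneg_right (by linarith) ht0.le
  have hsummable : Summable (fun n => ∫ t in Ioi (0:ℝ), ‖F n t‖) :=
    summable_of_sum_range_le (fun n => integral_nonneg fun t => norm_nonneg _) hsum_le
  have hHS := hasSum_integral_of_summable_integral_norm (fun n => hFint n) hsummable
  have hz : ∀ n : ℕ, (∫ t in Ioi (0:ℝ), F n t) = 0 := by
    intro n
    rw [hFdef]
    dsimp only
    rw [integral_const_mul, hP (m + n) (le_trans hm (Nat.le_add_right m n)), mul_zero]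
  simp only [hz] at hHS
  have h0 : (∫ t in Ioi (0:ℝ), ∑' n, F n t) = 0 := (hHS.unique hasSum_zero)
  rw [← h0]
  refine setIntegral_congr_fun measurableSet_Ioi ?_
  intro t ht
  have ht0 : (0:ℝ) < t := ht
  have hexp : Complex.exp ((((h / t : ℝ)) : ℂ) * Complex.I)
      = ∑' n : ℕ, ((((h / t : ℝ)) : ℂ) * Complex.I) ^ n / n.factorial := by
    rw [Complex.exp_eq_exp_ℂ]; exact congrFun NormedSpace.exp_eq_tsum_div _
  have e2 : ∀ n : ℕ, F n t =
      ((((f t * t ^ (-((m:ℝ) + a)) : ℝ)) : ℂ) * Complex.exp (((η₀ / t : ℝ) : ℂ) * Complex.I)) *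
        ((((h / t : ℝ) : ℂ) * Complex.I) ^ n / n.factorial) := by
    intro n
    rw [hFdef]
    dsimp only
    rw [hsplit n t ht0]
    have hr : ((f t * (t ^ (-((m:ℝ) + a)) * t⁻¹ ^ n) : ℝ) : ℂ)
        = ((f t * t ^ (-((m:ℝ) + a)) : ℝ) : ℂ) * ((t : ℂ)⁻¹) ^ n := by
      push_cast
      ring
    rw [hr]
    have hd : (((h / t : ℝ)) : ℂ) = (h : ℂ) * (t : ℂ)⁻¹ := by
      push_cast
      ring
    rw [hd]
    ring
  calc ((f t * t ^ (-((m:ℝ) + a)) : ℝ) : ℂ) * Complex.exp ((((η₀ + h) / t : ℝ) : ℂ) * Complex.I)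
      = (((f t * t ^ (-((m:ℝ) + a)) : ℝ) : ℂ) * Complex.exp (((η₀ / t : ℝ) : ℂ) * Complex.I)) *
        Complex.exp ((((h / t : ℝ)) : ℂ) * Complex.I) := by
        rw [mul_assoc, ← Complex.exp_add]
        congr 2
        push_cast
        field_simp
    _ = ∑' n : ℕ, F n t := by
        rw [hexp, ← tsum_mul_left]
        exact (tsum_congr e2).symm

/-- If `|f(t)| ≤ C e^{-c/t}` on `(0,∞)`, then all the integrals
`∫₀^∞ f(t) t^{-(m+a)} dt` (`m ≥ 1`) converge absolutely, and if they all vanish,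
then for every `η ∈ ℝ` the (absolutely convergent) oscillatory integral
`∫₀^∞ f(t) t^{-(1+a)} e^{iη/t} dt` vanishes as well. -/
theorem vanishing_moments_to_oscillatory (a : ℝ) (ha : a ∈ Ioo (0 : ℝ) 1)
    (f : ℝ → ℝ) (hf : Measurable f) (C c : ℝ) (hC : 0 < C) (hc : 0 < c)
    (hbound : ∀ t, 0 < t → |f t| ≤ C * Real.exp (-c / t)) :
    (∀ m : ℕ, 1 ≤ m →
      IntegrableOn (fun t : ℝ => f t * t ^ (-((m : ℝ) + a))) (Ioi 0)) ∧
    ((∀ m : ℕ, 1 ≤ m → (∫ t in Ioi (0 : ℝ), f t * t ^ (-((m : ℝ) + a))) = 0) →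
      ∀ η : ℝ,
        IntegrableOn
          (fun t : ℝ => (f t * t ^ (-(1 + a))) •
            Complex.exp (((η / t : ℝ) : ℂ) * Complex.I)) (Ioi 0) ∧
        (∫ t in Ioi (0 : ℝ), (f t * t ^ (-(1 + a))) •
            Complex.exp (((η / t : ℝ) : ℂ) * Complex.I)) = 0) := by
  obtain ⟨ha0, ha1⟩ := ha
  have hs1 : ∀ m : ℕ, 1 ≤ m → 1 < (m : ℝ) + a := by
    intro m hm
    have : (1 : ℝ) ≤ (m : ℝ) := by exact_mod_cast hm
    linarith
  constructor
  · intro m hm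
    exact L2 hf hc hbound (hs1 m hm)
  · intro hvanish η
    have h1a : 1 < 1 + a := by linarith
    constructor
    · have := L3 hf hc hbound (s := 1 + a) h1a η
      refine this.congr_fun (fun t _ => ?_) measurableSet_Ioi
      rw [Complex.real_smul]
    · -- the predicate
      set P : ℝ → Prop := fun η => ∀ m : ℕ, 1 ≤ m →
        (∫ t in Ioi (0:ℝ), ((f t * t ^ (-((m:ℝ) + a)) : ℝ) : ℂ) *
          Complex.exp (((η / t : ℝ) : ℂ) * Complex.I)) = 0 with hPdef
      have base : P 0 := by
        intro m hm
        have : (fun t : ℝ => ((f t * t ^ (-((m:ℝ) + a)) : ℝ) : ℂ) *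
            Complex.exp (((0 / t : ℝ) : ℂ) * Complex.I))
            = fun t : ℝ => ((f t * t ^ (-((m:ℝ) + a)) : ℝ) : ℂ) := by
          funext t
          rw [zero_div, Complex.ofReal_zero, zero_mul, Complex.exp_zero, mul_one]
        rw [this]
        have h2 : (∫ t in Ioi (0:ℝ), ((f t * t ^ (-((m:ℝ) + a)) : ℝ) : ℂ))
            = ((∫ t in Ioi (0:ℝ), f t * t ^ (-((m:ℝ) + a)) : ℝ) : ℂ) := integral_ofReal
        rw [h2, hvanish m hm, Complex.ofReal_zero]
      have all : ∀ N : ℕ, ∀ η : ℝ, |η| ≤ N * (c / 2) → P η := by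
        intro N
        induction N with
        | zero =>
          intro η hη
          have : η = 0 := by
            have := abs_nonneg η
            have : |η| = 0 := le_antisymm (by simpa using hη) (abs_nonneg η)
            exact abs_eq_zero.mp this
          rw [this]; exact base
        | succ N ih =>
          intro η hη
          have hN1 : (0 : ℝ) < (N : ℝ) + 1 := by positivity
          have hsplit : η = η * N / (N + 1) + η / (N + 1) := by field_simp
          have hprev : P (η * N / (N + 1)) := by
            apply ih
            rw [abs_div, abs_mul, abs_of_nonneg (le_of_lt hN1)]
            rw [div_le_iff₀ hN1]
            have hN0 : |(N : ℝ)| = (N : ℝ) := abs_of_nonneg (Nat.cast_nonneg N)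
            rw [hN0]
            calc |η| * (N : ℝ) ≤ ((N + 1 : ℕ) * (c / 2)) * N := by
                  apply mul_le_mul_of_nonneg_right _ (Nat.cast_nonneg N)
                  simpa using hη
              _ = (N : ℝ) * (c / 2) * ((N : ℝ) + 1) := by push_cast; ring
          have hstep : |η / (N + 1)| ≤ c / 2 := by
            rw [abs_div, abs_of_nonneg (le_of_lt hN1), div_le_iff₀ hN1]
            calc |η| ≤ (N + 1 : ℕ) * (c / 2) := hη
              _ = (c / 2) * ((N : ℝ) + 1) := by push_cast; ring
          have := Lstep ha0 hf hC hc hbound hstep hprev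
          rw [hPdef]
          intro m hm
          rw [hsplit]
          exact this m hm
      obtain ⟨N, hN⟩ : ∃ N : ℕ, |η| ≤ N * (c / 2) := by
        obtain ⟨N, hN⟩ := exists_nat_ge (|η| / (c / 2))
        exact ⟨N, by rwa [div_le_iff₀ (by linarith : (0:ℝ) < c / 2)] at hN⟩
      have := all N η hN 1 le_rfl
      simp only [Nat.cast_one] at this
      simpa only [Complex.real_smul] using this
end

section
/- Let a ∈ (0,1) and let f : (0,∞) → ℝ be measurable with |f(t)| ≤ C e^{-c/t} for all t > 0, for some constants C, c > 0. If ∫₀^∞ f(t) t^{-(m+a)} dt = 0 for every integer m ≥ 1, then f(t) = 0 for almost every t ∈ (0,∞). -/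
open MeasureTheory Set Filter Topology
open scoped ENNReal

private lemma exp_tsum (x : ℝ) : Real.exp x = ∑' n : ℕ, x ^ n / (n.factorial : ℝ) := by
  rw [Real.exp_eq_exp_ℝ, NormedSpace.exp_eq_tsum_div]

private lemma integrableOn_core {b d : ℝ} (hb : 1 < b) (hd : 0 < d) :
    IntegrableOn (fun t : ℝ => t ^ (-b) * Real.exp (-d / t)) (Ioi (0:ℝ)) := by
  have hmeas : Measurable fun t : ℝ => t ^ (-b) * Real.exp (-d / t) := by fun_prop
  have h1 : IntegrableOn (fun t : ℝ => t ^ (-b) * Real.exp (-d / t)) (Ioc (0:ℝ) 1) := by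
    set n : ℕ := ⌈b⌉₊ with hn
    have hbn : b ≤ (n : ℝ) := Nat.le_ceil b
    refine Integrable.mono' (g := fun _ => (n.factorial : ℝ) / d ^ n)
      (integrableOn_const measure_Ioc_lt_top.ne) hmeas.aestronglyMeasurable ?_
    filter_upwards [ae_restrict_mem measurableSet_Ioc] with t ht
    obtain ⟨ht0, ht1⟩ := ht
    have hxpos : 0 < d / t := div_pos hd ht0
    have h1 : d ^ n / t ^ n ≤ (n.factorial : ℝ) * Real.exp (d / t) := by
      have h := Real.pow_div_factorial_le_exp (d/t) hxpos.le n
      rw [div_pow, div_le_iff₀ (by positivity : (0:ℝ) < (n.factorial:ℝ))] at h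
      linarith
    have h2 : Real.exp (-d / t) ≤ (n.factorial : ℝ) * t ^ n / d ^ n := by
      rw [neg_div, Real.exp_neg]
      rw [inv_le_comm₀ (Real.exp_pos _) (by positivity)]
      rw [div_le_iff₀ (by positivity : (0:ℝ) < t^n)] at h1
      rw [inv_div, div_le_iff₀ (by positivity : (0:ℝ) < (n.factorial:ℝ) * t^n)]
      nlinarith [Real.exp_pos (d/t)]
    have h3 : t ^ (-b) * ((n.factorial : ℝ) * t ^ n / d ^ n) ≤ (n.factorial : ℝ) / d ^ n := by
      have ht0' : (0:ℝ) ≤ t := ht0.le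
      have htn : t ^ (-b) * t ^ n = t ^ ((n:ℝ) - b) := by
        rw [← Real.rpow_natCast t n, ← Real.rpow_add ht0]
        ring_nf
      have h4 : t ^ ((n:ℝ) - b) ≤ 1 := Real.rpow_le_one ht0' ht1 (by linarith)
      calc t ^ (-b) * ((n.factorial : ℝ) * t ^ n / d ^ n)
          = (t ^ (-b) * t ^ n) * ((n.factorial : ℝ) / d ^ n) := by ring
        _ = t ^ ((n:ℝ) - b) * ((n.factorial : ℝ) / d ^ n) := by rw [htn]
        _ ≤ 1 * ((n.factorial : ℝ) / d ^ n) := by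
            apply mul_le_mul_of_nonneg_right h4 (by positivity)
        _ = (n.factorial : ℝ) / d ^ n := one_mul _
    have hpos : (0:ℝ) ≤ t ^ (-b) := Real.rpow_nonneg ht0.le _
    rw [Real.norm_eq_abs, abs_of_nonneg (by positivity)]
    calc t ^ (-b) * Real.exp (-d / t) ≤ t ^ (-b) * ((n.factorial : ℝ) * t ^ n / d ^ n) :=
          mul_le_mul_of_nonneg_left h2 hpos
      _ ≤ _ := h3
  have h2 : IntegrableOn (fun t : ℝ => t ^ (-b) * Real.exp (-d / t)) (Ioi (1:ℝ)) := by
    refine Integrable.mono' (g := fun t => t ^ (-b))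
      (integrableOn_Ioi_rpow_of_lt (by linarith) zero_lt_one) hmeas.aestronglyMeasurable ?_
    filter_upwards [ae_restrict_mem measurableSet_Ioi] with t ht
    have ht0 : (0:ℝ) < t := lt_trans zero_lt_one ht
    rw [Real.norm_eq_abs, abs_of_nonneg (by positivity)]
    have : Real.exp (-d / t) ≤ 1 := Real.exp_le_one_iff.2 (by
      rw [neg_div]; exact neg_nonpos_of_nonneg (div_nonneg hd.le ht0.le))
    nlinarith [Real.rpow_nonneg ht0.le (-b)]
  have := h1.union h2
  rwa [Ioc_union_Ioi_eq_Ioi zero_le_one] at this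

private lemma integrable_term {f : ℝ → ℝ} (hf : Measurable f) {C c : ℝ} (hc : 0 < c)
    (hbound : ∀ t, 0 < t → |f t| ≤ C * Real.exp (-c / t))
    {b : ℝ} (hb : 1 < b) {s : ℝ} (hs : 0 ≤ s) :
    IntegrableOn (fun t => f t * t ^ (-b) * Real.exp (-s / t)) (Ioi (0:ℝ)) := by
  refine Integrable.mono' (g := fun t => C * (t ^ (-b) * Real.exp (-(c + s) / t)))
    ((integrableOn_core hb (by linarith)).const_mul C)
    (by fun_prop : Measurable fun t : ℝ => f t * t ^ (-b) * Real.exp (-s / t)).aestronglyMeasurable ?_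
  filter_upwards [ae_restrict_mem measurableSet_Ioi] with t ht
  have ht0 : (0:ℝ) < t := ht
  have hexp : Real.exp (-c/t) * Real.exp (-s/t) = Real.exp (-(c+s)/t) := by
    rw [← Real.exp_add]; congr 1; ring
  have h1 : |f t| ≤ C * Real.exp (-c/t) := hbound t ht0
  rw [Real.norm_eq_abs, abs_mul, abs_mul, abs_of_nonneg (Real.rpow_nonneg ht0.le (-b)),
    abs_of_nonneg (Real.exp_pos (-s/t)).le]
  calc |f t| * t^(-b) * Real.exp (-s/t)
      ≤ (C * Real.exp (-c/t)) * t^(-b) * Real.exp (-s/t) := by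
        apply mul_le_mul_of_nonneg_right
          (mul_le_mul_of_nonneg_right h1 (Real.rpow_nonneg ht0.le _)) (Real.exp_pos _).le
    _ = C * (t^(-b) * Real.exp (-(c+s)/t)) := by rw [← hexp]; ring

private noncomputable def Dint (f : ℝ → ℝ) (a : ℝ) (k : ℕ) (s : ℝ) : ℝ :=
  ∫ t in Ioi (0:ℝ), f t * t ^ (-(1 + a + (k:ℝ))) * Real.exp (-s / t)

private lemma Dint_step {f : ℝ → ℝ} (hf : Measurable f) {a C c : ℝ} (ha : 0 < a)
    (hC : 0 < C) (hc : 0 < c)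
    (hbound : ∀ t, 0 < t → |f t| ≤ C * Real.exp (-c / t))
    {s0 δ : ℝ} (hs0 : 0 ≤ s0) (hδ0 : 0 ≤ δ) (hδ : δ ≤ c / 2)
    (h0 : ∀ k, Dint f a k s0 = 0) (k : ℕ) : Dint f a k (s0 + δ) = 0 := by
  set B : ℝ → ℝ := fun t => f t * t ^ (-(1 + a + (k:ℝ))) * Real.exp (-s0 / t) with hB
  set F : ℕ → ℝ → ℝ := fun j t => ((-δ / t) ^ j / (j.factorial : ℝ)) * B t with hF
  have hBmeas : Measurable B := by fun_prop
  have hFmeas : ∀ j, Measurable (F j) := fun j => by fun_prop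
  have hb1 : (1:ℝ) < 1 + a + (k:ℝ) := by
    have : (0:ℝ) ≤ (k:ℝ) := Nat.cast_nonneg k
    linarith
  -- pointwise tsum identity
  have hpt : ∀ t ∈ Ioi (0:ℝ),
      f t * t ^ (-(1 + a + (k:ℝ))) * Real.exp (-(s0 + δ) / t) = ∑' j, F j t := by
    intro t ht
    have hsum : ∑' j, F j t = Real.exp (-δ / t) * B t := by
      rw [exp_tsum (-δ / t), ← tsum_mul_right]
    rw [hsum, hB]
    have hE : Real.exp (-δ/t) * Real.exp (-s0/t) = Real.exp (-(s0+δ)/t) := by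
      rw [← Real.exp_add]; congr 1; ring
    rw [← hE]; ring
  -- lintegral bound
  have hdom : IntegrableOn (fun t : ℝ => C * (t ^ (-(1 + a + (k:ℝ))) * Real.exp (-(c/2) / t)))
      (Ioi (0:ℝ)) := (integrableOn_core hb1 (by linarith)).const_mul C
  have hlint : ∑' j, ∫⁻ t, ‖F j t‖₊ ∂(volume.restrict (Ioi (0:ℝ))) ≠ ∞ := by
    rw [← lintegral_tsum (fun j => (hFmeas j).nnnorm.coe_nnreal_ennreal.aemeasurable)]
    apply ne_of_lt
    calc ∫⁻ t, ∑' j, (‖F j t‖₊ : ℝ≥0∞) ∂(volume.restrict (Ioi (0:ℝ)))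
        ≤ ∫⁻ t, ENNReal.ofReal (C * (t ^ (-(1 + a + (k:ℝ))) * Real.exp (-(c/2) / t)))
            ∂(volume.restrict (Ioi (0:ℝ))) := by
          apply lintegral_mono_ae
          filter_upwards [ae_restrict_mem measurableSet_Ioi] with t ht
          have ht0 : (0:ℝ) < t := ht
          have habs : ∀ j : ℕ, |F j t| = (δ/t)^j / (j.factorial : ℝ) * |B t| := by
            intro j
            rw [hF]
            rw [abs_mul, abs_div, abs_pow, abs_div, abs_neg, abs_of_nonneg hδ0,
              abs_of_pos ht0, abs_of_nonneg (Nat.cast_nonneg _)]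
          have hsummable : Summable fun j : ℕ => (δ/t)^j / (j.factorial : ℝ) * |B t| :=
            (Real.summable_pow_div_factorial (δ/t)).mul_right _
          have h1 : ∑' j, (‖F j t‖₊ : ℝ≥0∞)
              = ENNReal.ofReal (Real.exp (δ/t) * |B t|) := by
            have : ∀ j : ℕ, (‖F j t‖₊ : ℝ≥0∞)
                = ENNReal.ofReal ((δ/t)^j / (j.factorial : ℝ) * |B t|) := by
              intro j; rw [← enorm_eq_nnnorm, Real.enorm_eq_ofReal_abs, habs j]
            rw [tsum_congr this, ← ENNReal.ofReal_tsum_of_nonneg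
              (fun j => by positivity) hsummable]
            congr 1
            rw [tsum_mul_right, ← exp_tsum (δ/t)]
          rw [h1]
          apply ENNReal.ofReal_le_ofReal
          have hBb : |B t| ≤ C * Real.exp (-c/t) * t ^ (-(1 + a + (k:ℝ)))
              * Real.exp (-s0/t) := by
            rw [hB, abs_mul, abs_mul, abs_of_nonneg (Real.rpow_nonneg ht0.le _),
              abs_of_nonneg (Real.exp_pos _).le]
            apply mul_le_mul_of_nonneg_right
              (mul_le_mul_of_nonneg_right (hbound t ht0) (Real.rpow_nonneg ht0.le _))
              (Real.exp_pos _).le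
          calc Real.exp (δ/t) * |B t|
              ≤ Real.exp (δ/t) * (C * Real.exp (-c/t) * t ^ (-(1 + a + (k:ℝ)))
                  * Real.exp (-s0/t)) :=
                mul_le_mul_of_nonneg_left hBb (Real.exp_pos _).le
            _ = C * (t ^ (-(1 + a + (k:ℝ)))
                  * Real.exp ((δ - c - s0)/t)) := by
                have hee : Real.exp (δ/t) * (Real.exp (-c/t) * Real.exp (-s0/t))
                    = Real.exp ((δ-c-s0)/t) := by
                  rw [← Real.exp_add, ← Real.exp_add]
                  congr 1
                  ring
                rw [← hee]
                ring
            _ ≤ C * (t ^ (-(1 + a + (k:ℝ))) * Real.exp (-(c/2) / t)) := by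
                gcongr
                linarith
      _ < ∞ := hdom.lintegral_lt_top
  have key : Dint f a k (s0 + δ) = ∑' j, ∫ t in Ioi (0:ℝ), F j t := by
    have h1 : Dint f a k (s0 + δ) = ∫ t in Ioi (0:ℝ), ∑' j, F j t := by
      simp only [Dint]
      exact setIntegral_congr_fun measurableSet_Ioi hpt
    rw [h1]
    exact integral_tsum (fun j => (hFmeas j).aestronglyMeasurable) hlint
  have hFint : ∀ j : ℕ, ∫ t in Ioi (0:ℝ), F j t
      = ((-δ)^j / (j.factorial : ℝ)) * Dint f a (k + j) s0 := by
    intro j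
    simp only [Dint]
    rw [← integral_const_mul]
    apply setIntegral_congr_fun measurableSet_Ioi
    intro t ht
    have ht0 : (0:ℝ) < t := ht
    have h2 : t ^ (-(1 + a + (k:ℝ))) / (t:ℝ)^j = t ^ (-(1 + a + ((k+j:ℕ):ℝ))) := by
      rw [← Real.rpow_natCast t j, ← Real.rpow_sub ht0]
      congr 1
      push_cast
      ring
    calc F j t = ((-δ)^j / (j.factorial:ℝ))
          * (f t * (t ^ (-(1+a+(k:ℝ))) / (t:ℝ)^j) * Real.exp (-s0/t)) := by
          simp only [hF, hB]
          rw [div_pow]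
          ring
      _ = ((-δ)^j / (j.factorial:ℝ))
          * (f t * t ^ (-(1 + a + ((k+j:ℕ):ℝ))) * Real.exp (-s0/t)) := by rw [h2]
  calc Dint f a k (s0 + δ) = ∑' j, ∫ t in Ioi (0:ℝ), F j t := key
    _ = ∑' j : ℕ, ((-δ)^j / (j.factorial : ℝ)) * Dint f a (k + j) s0 := tsum_congr hFint
    _ = 0 := by simp [h0]

private lemma weierstrass_near {φ : ℝ → ℝ} (hφ : ContinuousOn φ (Icc (0:ℝ) 1)) {ε : ℝ}
    (hε : 0 < ε) : ∃ p : Polynomial ℝ, ∀ u ∈ Icc (0:ℝ) 1, |φ u - p.eval u| ≤ ε := by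
  set φc : C(Icc (0:ℝ) 1, ℝ) := ⟨fun u => φ u, continuousOn_iff_continuous_restrict.mp hφ⟩
  have hmem : φc ∈ closure ((polynomialFunctions (Icc (0:ℝ) 1)) : Set C(Icc (0:ℝ) 1, ℝ)) := by
    have h := polynomialFunctions_closure_eq_top (0:ℝ) 1
    have : φc ∈ (polynomialFunctions (Icc (0:ℝ) 1)).topologicalClosure := by
      rw [h]; trivial
    exact this
  obtain ⟨q, hq, hqd⟩ := Metric.mem_closure_iff.mp hmem ε hε
  rw [polynomialFunctions_coe] at hq
  obtain ⟨p, rfl⟩ := hq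
  refine ⟨p, fun u hu => ?_⟩
  have h1 : dist (φc ⟨u, hu⟩) ((Polynomial.toContinuousMapOnAlgHom (Icc (0:ℝ) 1) p) ⟨u, hu⟩)
      ≤ dist φc (Polynomial.toContinuousMapOnAlgHom (Icc (0:ℝ) 1) p) :=
    ContinuousMap.dist_apply_le_dist _
  have h2 := h1.trans hqd.le
  simp [Real.dist_eq] at h2
  exact h2

private lemma phi_cont {ψ : ℝ → ℝ} (hψ : Continuous ψ) {R : ℝ} (hR : 0 < R)
    (hsupp : ∀ x : ℝ, R < |x| → ψ x = 0) :
    ContinuousOn (fun u : ℝ => if u < 1 then ψ (-(Real.log u)⁻¹) else 0) (Icc (0:ℝ) 1) := by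
  set φ : ℝ → ℝ := fun u => if u < 1 then ψ (-(Real.log u)⁻¹) else 0 with hφ
  intro u hu
  rcases eq_or_lt_of_le hu.2 with h1 | h1
  · -- u = 1
    have hval : φ u = 0 := by rw [hφ]; simp [h1]
    have hev : ∀ᶠ v in 𝓝[Icc (0:ℝ) 1] u, φ v = 0 := by
      have hS : Ioi (Real.exp (-(1/R))) ∈ 𝓝[Icc (0:ℝ) 1] u := by
        apply mem_nhdsWithin_of_mem_nhds
        apply Ioi_mem_nhds
        rw [h1]
        exact Real.exp_lt_one_iff.mpr (neg_lt_zero.mpr (by positivity))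
      filter_upwards [hS, self_mem_nhdsWithin] with v hv hv'
      rcases lt_or_ge v 1 with hv1 | hv1
      · have hv0 : (0:ℝ) < v := lt_trans (Real.exp_pos _) hv
        have hy0 : Real.log v < 0 := Real.log_neg hv0 hv1
        have hylb : -(1/R) < Real.log v := (Real.lt_log_iff_exp_lt hv0).mpr hv
        set y := Real.log v
        have hy : 0 < -y := by linarith
        have h5 : -y < R⁻¹ := by rw [← one_div]; linarith
        have h6 : R < (-y)⁻¹ := by
          rw [← inv_inv R]
          exact (inv_lt_inv₀ (by positivity) hy).mpr h5
        have h6' : R < -(y⁻¹) := by rwa [inv_neg] at h6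
        have h7 : ψ (-(y⁻¹)) = 0 :=
          hsupp _ (by rw [abs_of_pos (lt_trans hR h6')]; exact h6')
        rw [hφ]
        simp only [if_pos hv1]
        exact h7
      · rw [hφ]; simp [not_lt.mpr hv1]
    exact (continuousWithinAt_const (b := (0:ℝ))).congr_of_eventuallyEq hev hval
  rcases eq_or_lt_of_le hu.1 with h0 | h0
  · -- u = 0
    have hval : φ 0 = ψ 0 := by rw [hφ]; norm_num
    have hτ : Tendsto (fun v : ℝ => -(Real.log v)⁻¹) (nhdsWithin 0 (Ioi (0:ℝ))) (nhds 0) := by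
      have h2 : Tendsto (fun v : ℝ => -Real.log v) (nhdsWithin 0 (Ioi (0:ℝ))) atTop :=
        tendsto_neg_atBot_atTop.comp Real.tendsto_log_nhdsGT_zero
      have h3 := h2.inv_tendsto_atTop
      refine h3.congr fun v => ?_
      simp [Pi.inv_apply, inv_neg]
    have hsub : Icc (0:ℝ) 1 ⊆ {0} ∪ Ioc 0 1 := by
      intro x hx
      rcases eq_or_lt_of_le hx.1 with h | h
      · exact Or.inl (by simp [← h])
      · exact Or.inr ⟨h, hx.2⟩
    rw [ContinuousWithinAt, ← h0, hval]
    have hle : nhdsWithin (0:ℝ) (Icc 0 1) ≤ nhdsWithin 0 ({0} ∪ Ioc 0 1) :=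
      nhdsWithin_mono _ hsub
    apply Tendsto.mono_left ?_ hle
    rw [nhdsWithin_union, nhdsWithin_singleton]
    rw [Filter.tendsto_sup]
    constructor
    · have := tendsto_pure_nhds φ 0
      rwa [hval] at this
    · have hmain : Tendsto (fun v => ψ (-(Real.log v)⁻¹)) (nhdsWithin 0 (Ioc (0:ℝ) 1)) (nhds (ψ 0)) :=
        (hψ.tendsto 0).comp (hτ.mono_left (nhdsWithin_mono _ Ioc_subset_Ioi_self))
      apply hmain.congr'
      filter_upwards [self_mem_nhdsWithin, mem_nhdsWithin_of_mem_nhds (Iio_mem_nhds one_pos)]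
        with v hv hv'
      rw [hφ]
      exact (if_pos hv').symm
  · -- 0 < u < 1
    have hcont : ContinuousAt (fun v => ψ (-(Real.log v)⁻¹)) u := by
      apply (hψ.continuousAt).comp
      apply ContinuousAt.neg
      exact ContinuousAt.inv₀ (Real.continuousAt_log (ne_of_gt h0)) (ne_of_lt (Real.log_neg h0 h1))
    apply ContinuousAt.continuousWithinAt
    apply hcont.congr
    filter_upwards [Iio_mem_nhds h1] with v hv
    rw [hφ]
    exact (if_pos hv).symm

private lemma Dint_all {f : ℝ → ℝ} (hf : Measurable f) {a C c : ℝ} (ha : 0 < a)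
    (hC : 0 < C) (hc : 0 < c)
    (hbound : ∀ t, 0 < t → |f t| ≤ C * Real.exp (-c / t))
    (hmom : ∀ m : ℕ, 1 ≤ m → (∫ t in Ioi (0:ℝ), f t * t ^ (-((m : ℝ) + a))) = 0) :
    ∀ s : ℝ, 0 ≤ s → ∀ k, Dint f a k s = 0 := by
  have base : ∀ k, Dint f a k 0 = 0 := by
    intro k
    have he : -(1 + a + (k:ℝ)) = -((((k+1:ℕ)):ℝ) + a) := by push_cast; ring
    have h1 : Dint f a k 0 = ∫ t in Ioi (0:ℝ), f t * t ^ (-((((k+1:ℕ)):ℝ) + a)) := by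
      simp only [Dint, he, neg_zero, zero_div, Real.exp_zero, mul_one]
    rw [h1]
    exact hmom (k+1) (Nat.le_add_left 1 k)
  have main : ∀ n : ℕ, ∀ k, Dint f a k ((n:ℝ) * (c/2)) = 0 := by
    intro n
    induction n with
    | zero => intro k; simpa using base k
    | succ n ih =>
        have hcast : (((n+1:ℕ)):ℝ) * (c/2) = (n:ℝ)*(c/2) + c/2 := by push_cast; ring
        rw [hcast]
        exact Dint_step hf ha hC hc hbound (by positivity) (by positivity) le_rfl ih
  intro s hs
  have hc2 : (0:ℝ) < c/2 := by linarith
  set n := ⌊s / (c/2)⌋₊ with hn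
  have h1 : (n:ℝ) * (c/2) ≤ s := by
    have := Nat.floor_le (by positivity : (0:ℝ) ≤ s / (c/2))
    rw [← hn] at this
    calc (n:ℝ) * (c/2) ≤ (s / (c/2)) * (c/2) := by nlinarith
      _ = s := by field_simp
  have h2 : s < (n:ℝ)*(c/2) + c/2 := by
    have h3 := Nat.lt_floor_add_one (s/(c/2))
    rw [← hn] at h3
    have h4 : s / (c/2) * (c/2) < ((n:ℝ) + 1) * (c/2) := by nlinarith
    calc s = s / (c/2) * (c/2) := by field_simp
      _ < ((n:ℝ) + 1) * (c/2) := h4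
      _ = (n:ℝ)*(c/2) + c/2 := by ring
  intro k
  have h3 : (n:ℝ)*(c/2) + (s - (n:ℝ)*(c/2)) = s := by ring
  rw [← h3]
  exact Dint_step hf ha hC hc hbound (by positivity) (by linarith) (by linarith) (main n) k

/-- If `|f(t)| ≤ C e^{-c/t}` on `(0,∞)` and all the inverse moments
`∫₀^∞ f(t) t^{-(m+a)} dt` (`m ≥ 1`) vanish, then `f = 0` almost everywhere on `(0,∞)`. -/
theorem vanishing_moments_implies_zero (a : ℝ) (ha : a ∈ Ioo (0 : ℝ) 1)
    (f : ℝ → ℝ) (hf : Measurable f) (C c : ℝ) (hC : 0 < C) (hc : 0 < c)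
    (hbound : ∀ t, 0 < t → |f t| ≤ C * Real.exp (-c / t))
    (hmom : ∀ m : ℕ, 1 ≤ m → (∫ t in Ioi (0 : ℝ), f t * t ^ (-((m : ℝ) + a))) = 0) :
    ∀ᵐ t ∂(volume.restrict (Ioi (0 : ℝ))), f t = 0 := by
  obtain ⟨ha0, ha1⟩ := ha
  have hb1 : (1:ℝ) < 1 + a := by linarith
  set g : ℝ → ℝ := fun t => f t * t ^ (-(1+a)) with hg
  have hD : ∀ s : ℝ, 0 ≤ s → (∫ t in Ioi (0:ℝ), g t * Real.exp (-s/t)) = 0 := by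
    intro s hs
    have h0 := Dint_all hf ha0 hC hc hbound hmom s hs 0
    simp only [Dint, Nat.cast_zero, add_zero] at h0
    exact h0
  have hgmeas : Measurable g := by fun_prop
  have hgint : IntegrableOn g (Ioi (0:ℝ)) := by
    have h := integrable_term hf hc hbound hb1 (le_refl (0:ℝ))
    refine h.congr_fun ?_ measurableSet_Ioi
    intro t ht
    simp [hg]
  set G : ℝ → ℝ := indicator (Ioi (0:ℝ)) g with hG
  have hGint : Integrable G := (integrable_indicator_iff measurableSet_Ioi).mpr hgint
  have hzero : ∀ᵐ x, G x = 0 := by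
    apply ae_eq_zero_of_integral_contDiff_smul_eq_zero hGint.locallyIntegrable
    intro ψ hψs hψc
    have ψcont : Continuous ψ := hψs.continuous
    -- reduce to integral over Ioi 0
    have hred : (∫ x, ψ x • G x) = ∫ t in Ioi (0:ℝ), ψ t * g t := by
      have hfun : (fun x => ψ x • G x) = indicator (Ioi (0:ℝ)) (fun x => ψ x * g x) := by
        funext x
        by_cases hx : x ∈ Ioi (0:ℝ) <;>
          simp [hG, indicator_of_mem, indicator_of_notMem, hx, smul_eq_mul]
      rw [hfun, integral_indicator measurableSet_Ioi]
    rw [hred]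
    -- support bound for ψ
    obtain ⟨r, hr⟩ := hψc.isCompact.isBounded.subset_closedBall 0
    set R : ℝ := max r 1 with hR
    have hR0 : (0:ℝ) < R := lt_of_lt_of_le one_pos (le_max_right r 1)
    have hsupp : ∀ x : ℝ, R < |x| → ψ x = 0 := by
      intro x hx
      apply image_eq_zero_of_notMem_tsupport
      intro hmem
      have := hr hmem
      rw [Metric.mem_closedBall, Real.dist_eq, sub_zero] at this
      have : |x| ≤ R := le_trans this (le_max_left r 1)
      linarith
    set φ : ℝ → ℝ := fun u => if u < 1 then ψ (-(Real.log u)⁻¹) else 0 with hφ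
    have hφcont : ContinuousOn φ (Icc (0:ℝ) 1) := phi_cont ψcont hR0 hsupp
    have hφh : ∀ t : ℝ, 0 < t → φ (Real.exp (-(1/t))) = ψ t := by
      intro t ht
      have h1 : Real.exp (-(1/t)) < 1 :=
        Real.exp_lt_one_iff.mpr (neg_lt_zero.mpr (by positivity))
      rw [hφ]
      simp only [if_pos h1, Real.log_exp]
      congr 1
      rw [inv_neg, neg_neg, one_div, inv_inv]
    have hhmem : ∀ t : ℝ, 0 < t → Real.exp (-(1/t)) ∈ Icc (0:ℝ) 1 :=
      fun t ht => ⟨(Real.exp_pos _).le,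
        Real.exp_le_one_iff.mpr (neg_nonpos_of_nonneg (by positivity))⟩
    -- integrability of ψ * g
    obtain ⟨Mψ, hMψ⟩ := hψc.exists_bound_of_continuous ψcont
    have hψg_int : IntegrableOn (fun t => ψ t * g t) (Ioi (0:ℝ)) :=
      hgint.bdd_mul ψcont.aestronglyMeasurable (ae_of_all _ hMψ)
    -- polynomial integrals vanish
    have hkey : ∀ i : ℕ, (∫ t in Ioi (0:ℝ), g t * Real.exp (-(i:ℝ)/t)) = 0 :=
      fun i => hD (i:ℝ) (Nat.cast_nonneg i)
    have hterm_int : ∀ (p : Polynomial ℝ) (i : ℕ),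
        IntegrableOn (fun t => p.coeff i * (g t * Real.exp (-(i:ℝ)/t))) (Ioi (0:ℝ)) :=
      fun p i => (integrable_term hf hc hbound hb1 (Nat.cast_nonneg i)).const_mul _
    have hsum_eq : ∀ p : Polynomial ℝ, EqOn (fun t => Polynomial.eval (Real.exp (-(1/t))) p * g t)
        (fun t => ∑ i ∈ Finset.range (p.natDegree+1),
          p.coeff i * (g t * Real.exp (-(i:ℝ)/t))) (Ioi (0:ℝ)) := by
      intro p t ht
      have ht0 : (0:ℝ) < t := ht
      simp only
      rw [Polynomial.eval_eq_sum_range, Finset.sum_mul]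
      apply Finset.sum_congr rfl
      intro i _
      have hpow : Real.exp (-(1/t)) ^ i = Real.exp (-(i:ℝ)/t) := by
        rw [← Real.exp_nat_mul]
        congr 1
        ring
      calc p.coeff i * Real.exp (-(1/t)) ^ i * g t
          = p.coeff i * (g t * Real.exp (-(1/t)) ^ i) := by ring
        _ = p.coeff i * (g t * Real.exp (-(i:ℝ)/t)) := by rw [hpow]
    have hpint : ∀ p : Polynomial ℝ,
        IntegrableOn (fun t => Polynomial.eval (Real.exp (-(1/t))) p * g t) (Ioi (0:ℝ)) := by
      intro p
      exact IntegrableOn.congr_fun (integrable_finset_sum _ (fun i _ => hterm_int p i))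
        (hsum_eq p).symm measurableSet_Ioi
    have hpoly : ∀ p : Polynomial ℝ,
        (∫ t in Ioi (0:ℝ), Polynomial.eval (Real.exp (-(1/t))) p * g t) = 0 := by
      intro p
      rw [setIntegral_congr_fun measurableSet_Ioi (hsum_eq p),
        integral_finset_sum _ (fun i _ => hterm_int p i)]
      apply Finset.sum_eq_zero
      intro i _
      rw [integral_const_mul, hkey i, mul_zero]
    -- the approximation estimate
    set M : ℝ := ∫ t in Ioi (0:ℝ), |g t| with hM
    have hM0 : 0 ≤ M := setIntegral_nonneg measurableSet_Ioi (fun t _ => abs_nonneg _)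
    have hest : ∀ ε : ℝ, 0 < ε → |∫ t in Ioi (0:ℝ), ψ t * g t| ≤ ε * M := by
      intro ε hε
      obtain ⟨p, hp⟩ := weierstrass_near hφcont hε
      have hsub_int : IntegrableOn
          (fun t => (ψ t - Polynomial.eval (Real.exp (-(1/t))) p) * g t) (Ioi (0:ℝ)) :=
        IntegrableOn.congr_fun (hψg_int.sub (hpint p))
          (fun t _ => by simp only [Pi.sub_apply]; ring) measurableSet_Ioi
      have hsplit : (∫ t in Ioi (0:ℝ), ψ t * g t)
          = (∫ t in Ioi (0:ℝ), (ψ t - Polynomial.eval (Real.exp (-(1/t))) p) * g t)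
            + ∫ t in Ioi (0:ℝ), Polynomial.eval (Real.exp (-(1/t))) p * g t := by
        rw [← integral_add hsub_int (hpint p)]
        apply setIntegral_congr_fun measurableSet_Ioi
        intro t ht
        simp only
        ring
      have h1 : |∫ t in Ioi (0:ℝ), (ψ t - Polynomial.eval (Real.exp (-(1/t))) p) * g t|
          ≤ ∫ t in Ioi (0:ℝ), |(ψ t - Polynomial.eval (Real.exp (-(1/t))) p) * g t| :=
        by
          have hni := norm_integral_le_integral_norm (μ := volume.restrict (Ioi (0:ℝ)))
            (fun t => (ψ t - Polynomial.eval (Real.exp (-(1/t))) p) * g t)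
          simpa only [Real.norm_eq_abs] using hni
      have h2 : (∫ t in Ioi (0:ℝ), |(ψ t - Polynomial.eval (Real.exp (-(1/t))) p) * g t|)
          ≤ ∫ t in Ioi (0:ℝ), ε * |g t| := by
        apply setIntegral_mono_on hsub_int.abs (hgint.abs.const_mul ε) measurableSet_Ioi
        intro t ht
        have ht0 : (0:ℝ) < t := ht
        rw [abs_mul]
        apply mul_le_mul_of_nonneg_right ?_ (abs_nonneg _)
        have := hp (Real.exp (-(1/t))) (hhmem t ht0)
        rwa [hφh t ht0] at this
      have h3 : (∫ t in Ioi (0:ℝ), ε * |g t|) = ε * M := integral_const_mul ε _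
      calc |∫ t in Ioi (0:ℝ), ψ t * g t| ≤ ∫ t in Ioi (0:ℝ), |(ψ t - Polynomial.eval (Real.exp (-(1/t))) p) * g t| := by
            rw [hsplit, hpoly p, add_zero]; exact h1
        _ ≤ ε * M := h2.trans_eq h3
    -- conclude the integral is 0
    by_contra hne
    have hpos : 0 < |∫ t in Ioi (0:ℝ), ψ t * g t| := abs_pos.mpr hne
    rcases eq_or_lt_of_le hM0 with hMz | hMz
    · have := hest 1 one_pos
      rw [← hMz, mul_zero] at this
      linarith
    · have h5 := hest (|∫ t in Ioi (0:ℝ), ψ t * g t| / (2*M)) (by positivity)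
      have heq : |∫ t in Ioi (0:ℝ), ψ t * g t| / (2*M) * M
          = |∫ t in Ioi (0:ℝ), ψ t * g t| / 2 := by
        field_simp
      rw [heq] at h5
      linarith
  -- transfer back to f
  have h1 : ∀ᵐ t ∂(volume.restrict (Ioi (0:ℝ))), G t = 0 := ae_restrict_of_ae hzero
  filter_upwards [h1, ae_restrict_mem measurableSet_Ioi] with t htG ht
  rw [hG, indicator_of_mem ht] at htG
  have hrp : t ^ (-(1+a)) ≠ 0 := (Real.rpow_pos_of_pos ht _).ne'
  rcases mul_eq_zero.mp htG with h | h
  · exact h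
  · exact absurd h hrp
end

section
/- Change of variables for the Dirichlet form: let n ≥ 1 and let F : ℝⁿ → ℝⁿ be a C¹ diffeomorphism (bijective with C¹ inverse) whose Jacobian matrix DF(x) = (∂Fᵢ/∂xⱼ(x)) satisfies det DF(x) ≥ C > 0 for all x. Let A : ℝⁿ → (n×n real matrices) be measurable and locally bounded, let u : ℝⁿ → ℝ be C¹, and let φ : ℝⁿ → ℝ be C¹ with compact support. Define v := u ∘ F⁻¹, ψ := φ ∘ F⁻¹ and the push-forward (F_*A)(y) := [ DF(x) A(x) DF(x)ᵀ / det DF(x) ] evaluated at x = F⁻¹(y). Then ∫_{ℝⁿ} ⟨A(x) ∇u(x), ∇φ(x)⟩ dx = ∫_{ℝⁿ} ⟨(F_*A)(y) ∇v(y), ∇ψ(y)⟩ dy. -/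
open MeasureTheory
open scoped Matrix

/-- The gradient vector of `f : ℝⁿ → ℝ` at `x`, with components `∂f/∂xᵢ(x)`. -/
noncomputable def gradVec (n : ℕ) (f : (Fin n → ℝ) → ℝ) (x : Fin n → ℝ) : Fin n → ℝ :=
  fun i => fderiv ℝ f x (Pi.single i 1)

/-- The Jacobian matrix `DF(x) = (∂Fᵢ/∂xⱼ(x))` of `F : ℝⁿ → ℝⁿ` at `x`. -/
noncomputable def jacMatrix (n : ℕ) (F : (Fin n → ℝ) → Fin n → ℝ) (x : Fin n → ℝ) :
    Matrix (Fin n) (Fin n) ℝ :=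
  Matrix.of fun i j => fderiv ℝ F x (Pi.single j 1) i


lemma single_eq_smul {n : ℕ} (c : ℝ) (k : Fin n) :
    Pi.single k c = c • (Pi.single k 1 : Fin n → ℝ) := by
  funext i
  simp [Pi.single_apply, mul_ite]

lemma vec_eq_sum {n : ℕ} (w : Fin n → ℝ) :
    w = ∑ k, Pi.single k (w k) := by
  exact (Finset.univ_sum_single w).symm

lemma clm_apply_eq_sum {n : ℕ} {M : Type*} [NormedAddCommGroup M] [NormedSpace ℝ M]
    (L : (Fin n → ℝ) →L[ℝ] M) (w : Fin n → ℝ) :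
    L w = ∑ k, w k • L (Pi.single k 1) := by
  conv_lhs => rw [vec_eq_sum w]
  rw [map_sum]
  congr 1; funext k
  rw [single_eq_smul, _root_.map_smul]

lemma gradVec_comp {n : ℕ} (u : (Fin n → ℝ) → ℝ) (f : (Fin n → ℝ) → Fin n → ℝ)
    (y : Fin n → ℝ) (hu : DifferentiableAt ℝ u (f y)) (hf : DifferentiableAt ℝ f y) :
    gradVec n (u ∘ f) y = (jacMatrix n f y)ᵀ.mulVec (gradVec n u (f y)) := by
  funext j
  have h : fderiv ℝ (u ∘ f) y = (fderiv ℝ u (f y)).comp (fderiv ℝ f y) :=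
    fderiv_comp y hu hf
  simp only [gradVec, h, ContinuousLinearMap.coe_comp', Function.comp_apply]
  rw [clm_apply_eq_sum (fderiv ℝ u (f y))]
  simp [Matrix.mulVec, dotProduct, jacMatrix, gradVec, Matrix.transpose_apply, mul_comm]

lemma jacMatrix_comp {n : ℕ} (g f : (Fin n → ℝ) → Fin n → ℝ) (x : Fin n → ℝ)
    (hg : DifferentiableAt ℝ g (f x)) (hf : DifferentiableAt ℝ f x) :
    jacMatrix n (g ∘ f) x = jacMatrix n g (f x) * jacMatrix n f x := by
  funext i j
  have h : fderiv ℝ (g ∘ f) x = (fderiv ℝ g (f x)).comp (fderiv ℝ f x) :=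
    fderiv_comp x hg hf
  simp only [jacMatrix, Matrix.of_apply, h, ContinuousLinearMap.coe_comp',
    Function.comp_apply, Matrix.mul_apply]
  rw [clm_apply_eq_sum (fderiv ℝ g (f x))]
  simp [Finset.sum_apply, mul_comm]

lemma jacMatrix_id {n : ℕ} (x : Fin n → ℝ) : jacMatrix n id x = 1 := by
  funext i j
  simp [jacMatrix, fderiv_id', Matrix.one_apply, Pi.single_apply, eq_comm]

lemma det_fderiv_eq {n : ℕ} (F : (Fin n → ℝ) → Fin n → ℝ) (x : Fin n → ℝ) :
    (fderiv ℝ F x : (Fin n → ℝ) →L[ℝ] Fin n → ℝ).det = (jacMatrix n F x).det := by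
  rw [ContinuousLinearMap.det, ← LinearMap.det_toMatrix']
  congr 1

/-- Change of variables for the Dirichlet form. If `F` is a `C¹`
diffeomorphism of `ℝⁿ` with `det DF ≥ C > 0`, `A` is measurable and locally
bounded, `u` is `C¹` and `φ` is `C¹` with compact support, then with
`v = u ∘ F⁻¹`, `ψ = φ ∘ F⁻¹` and `(F_*A)(y) = DF A DFᵀ / det DF` at `x = F⁻¹(y)`,
`∫ ⟨A ∇u, ∇φ⟩ dx = ∫ ⟨F_*A ∇v, ∇ψ⟩ dy`. -/
theorem dirichlet_form_change_of_variables (n : ℕ) (hn : 1 ≤ n)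
    (F Finv : (Fin n → ℝ) → Fin n → ℝ)
    (hF : ContDiff ℝ 1 F) (hFinv : ContDiff ℝ 1 Finv)
    (hleft : Function.LeftInverse Finv F) (hright : Function.RightInverse Finv F)
    (C : ℝ) (hC : 0 < C) (hdet : ∀ x, C ≤ (jacMatrix n F x).det)
    (A : (Fin n → ℝ) → Matrix (Fin n) (Fin n) ℝ) (hA : ∀ i j, Measurable fun x => A x i j)
    (hAloc : ∀ x : Fin n → ℝ, ∃ M : ℝ, ∀ᶠ y in nhds x, ∀ i j, |A y i j| ≤ M)
    (u φ : (Fin n → ℝ) → ℝ) (hu : ContDiff ℝ 1 u) (hφ : ContDiff ℝ 1 φ)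
    (hφc : HasCompactSupport φ) :
    (∫ x, dotProduct ((A x).mulVec (gradVec n u x)) (gradVec n φ x)) =
      ∫ y, (1 / (jacMatrix n F (Finv y)).det) *
        dotProduct
          ((jacMatrix n F (Finv y) * A (Finv y) * (jacMatrix n F (Finv y))ᵀ).mulVec
            (gradVec n (u ∘ Finv) y))
          (gradVec n (φ ∘ Finv) y) := by
  have hFd : Differentiable ℝ F := hF.differentiable one_ne_zero
  have hFinvd : Differentiable ℝ Finv := hFinv.differentiable one_ne_zero
  have hud : Differentiable ℝ u := hu.differentiable one_ne_zero
  have hφd : Differentiable ℝ φ := hφ.differentiable one_ne_zero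
  have hNM : ∀ x, jacMatrix n Finv (F x) * jacMatrix n F x = 1 := by
    intro x
    rw [← jacMatrix_comp Finv F x (hFinvd _) (hFd _)]
    have h1 : Finv ∘ F = id := funext hleft
    rw [h1, jacMatrix_id]
  have hdetpos : ∀ x, 0 < (jacMatrix n F x).det := fun x => lt_of_lt_of_le hC (hdet x)
  set g : (Fin n → ℝ) → ℝ := fun y => (1 / (jacMatrix n F (Finv y)).det) *
        dotProduct
          ((jacMatrix n F (Finv y) * A (Finv y) * (jacMatrix n F (Finv y))ᵀ).mulVec
            (gradVec n (u ∘ Finv) y))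
          (gradVec n (φ ∘ Finv) y) with hg
  have cov := MeasureTheory.integral_image_eq_integral_abs_det_fderiv_smul
    (μ := volume) MeasurableSet.univ
    (fun x _ => (hFd x).hasFDerivAt.hasFDerivWithinAt) hleft.injective.injOn g
  have himg : F '' Set.univ = Set.univ := by
    rw [Set.image_univ]; exact hright.surjective.range_eq
  rw [himg, MeasureTheory.setIntegral_univ, MeasureTheory.setIntegral_univ] at cov
  rw [cov]
  congr 1
  funext x
  have hFx : Finv (F x) = x := hleft x
  set M := jacMatrix n F x with hM
  set N := jacMatrix n Finv (F x) with hNdef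
  have hgu : gradVec n (u ∘ Finv) (F x) = Nᵀ.mulVec (gradVec n u x) := by
    rw [gradVec_comp u Finv (F x) (by rw [hFx]; exact hud x) (hFinvd _), hFx]
  have hgφ : gradVec n (φ ∘ Finv) (F x) = Nᵀ.mulVec (gradVec n φ x) := by
    rw [gradVec_comp φ Finv (F x) (by rw [hFx]; exact hφd x) (hFinvd _), hFx]
  have hNM' : N * M = 1 := hNM x
  have hd : (0:ℝ) < M.det := hdetpos x
  simp only [hg, hFx, hgu, hgφ]
  rw [det_fderiv_eq, ← hM]
  have e1 : (M * A x * Mᵀ).mulVec (Nᵀ.mulVec (gradVec n u x)) =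
      (M * A x).mulVec (gradVec n u x) := by
    rw [Matrix.mulVec_mulVec, Matrix.mul_assoc, ← Matrix.transpose_mul, hNM',
      Matrix.transpose_one, Matrix.mul_one]
  rw [e1, Matrix.dotProduct_mulVec, Matrix.vecMul_transpose, Matrix.mulVec_mulVec,
    ← Matrix.mul_assoc, hNM', Matrix.one_mul]
  rw [abs_of_pos hd, smul_eq_mul]
  field_simp
end
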